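/- arXiv:2501.18825 — 4 statements merged into one kernel-verified Lean document; each statement's English description precedes it below -/
import Mathlib

section
/- Let X be an elliptic curve, f : X → ℙ¹ a finite surjective morphism of degree n, and E_r the unique (up to isomorphism) indecomposable self-dual bundle of rank r and degree 0 on X with h^0(E_r) = 1. Then f_*E_r ≅ 𝒪 ⊕ 𝒪(-1)^{⊕(rn-2)} ⊕ 𝒪(-2). Moreover, for any other indecomposable bundle E of rank r and degree 0 on X (not isomorphic to E_r), f_*E ≅ 𝒪(-1)^{⊕rn}. -/
/-- Abstract setup for the splitting-type description of pushforwards of vector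
bundles along a finite surjective morphism `f : X → ℙ¹` of degree `n`, where `X`
is a smooth irreducible projective curve of genus `g` over an algebraically
closed field.  `Bun` is the set of isomorphism classes of vector bundles on `X`;
`push E` is the multiset of degrees of the line bundle summands occurring in the
Grothendieck splitting `f_* E ≅ ⊕ 𝒪(n_j)`; `pull ℓ` is the line bundle `f^* 𝒪(ℓ)`
(of degree `ℓ·n`); `K` is the canonical bundle; `atiyah r` is the Atiyah bundle
`E_r` (relevant when `g = 1`); `h0`, `h1` are the dimensions of the sheaf
cohomology groups.  The axioms record the standard facts used in the paper:
cohomology of line bundles on `ℙ¹` combined with preservation of cohomology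
under pushforward along a finite map, the projection formula, Serre duality,
Riemann–Roch style vanishing, and Atiyah's classification on elliptic curves. -/
structure PushforwardSetup where
  g : ℕ
  n : ℕ
  npos : 0 < n
  Bun : Type
  rank : Bun → ℕ
  deg : Bun → ℤ
  h0 : Bun → ℕ
  h1 : Bun → ℕ
  tensor : Bun → Bun → Bun
  dual : Bun → Bun
  K : Bun
  pull : ℤ → Bun
  indec : Bun → Prop
  atiyah : ℕ → Bun
  push : Bun → Multiset ℤ
  rank_pos : ∀ E, 0 < rank E
  rank_K : rank K = 1
  deg_K : deg K = 2 * (g : ℤ) - 2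
  rank_dual : ∀ E, rank (dual E) = rank E
  deg_dual : ∀ E, deg (dual E) = - deg E
  rank_tensor : ∀ E F, rank (tensor E F) = rank E * rank F
  deg_tensor_line : ∀ L E, rank L = 1 → deg (tensor L E) = (rank E : ℤ) * deg L + deg E
  rank_pull : ∀ ℓ, rank (pull ℓ) = 1
  deg_pull : ∀ ℓ, deg (pull ℓ) = ℓ * n
  pull_add : ∀ a b, tensor (pull a) (pull b) = pull (a + b)
  h0_pull_zero : h0 (pull 0) = 1
  indec_tensor_pull : ∀ ℓ E, indec E → indec (tensor (pull ℓ) E)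
  h0_vanish : ∀ L, rank L = 1 → deg L < 0 → h0 L = 0
  h1_vanish : ∀ L, rank L = 1 → 2 * (g : ℤ) - 2 < deg L → h1 L = 0
  serre0 : ∀ E, h0 (tensor K (dual E)) = h1 E
  serre1 : ∀ E, h1 (tensor K (dual E)) = h0 E
  h1_canonical_only : ∀ L, rank L = 1 → deg L = 2 * (g : ℤ) - 2 → L ≠ K → h1 L = 0
  h1_K : h1 K = 1
  push_card : ∀ E, Multiset.card (push E) = rank E * n
  push_h0 : ∀ E, (h0 E : ℤ) = ((push E).map (fun j => max (j + 1) 0)).sum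
  push_h1 : ∀ E, (h1 E : ℤ) = ((push E).map (fun j => max (-j - 1) 0)).sum
  projection : ∀ ℓ E, push (tensor (pull ℓ) E) = (push E).map (fun j => j + ℓ)
  atiyah_rank : ∀ r, rank (atiyah r) = r
  atiyah_deg : ∀ r, deg (atiyah r) = 0
  atiyah_indec : g = 1 → ∀ r, 0 < r → indec (atiyah r)
  atiyah_h0 : g = 1 → ∀ r, 0 < r → h0 (atiyah r) = 1
  atiyah_h1 : g = 1 → ∀ r, 0 < r → h1 (atiyah r) = 1
  ell_h0_pos : g = 1 → ∀ E, indec E → 0 < deg E → (h0 E : ℤ) = deg E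
  ell_h1_pos : g = 1 → ∀ E, indec E → 0 < deg E → h1 E = 0
  ell_h0_zero : g = 1 → ∀ E, indec E → deg E = 0 → E ≠ atiyah (rank E) → h0 E = 0
  ell_h1_zero : g = 1 → ∀ E, indec E → deg E = 0 → E ≠ atiyah (rank E) → h1 E = 0

private lemma push_aux_sum_zero {f : ℤ → ℤ} {m : Multiset ℤ} (hf : ∀ x ∈ m, 0 ≤ f x)
    (h : (m.map f).sum = 0) : ∀ x ∈ m, f x = 0 := by
  intro x hx
  have h1 : f x ≤ (m.map f).sum := by
    refine Multiset.single_le_sum ?_ _ (Multiset.mem_map_of_mem f hx)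
    intro y hy
    obtain ⟨z, hz, rfl⟩ := Multiset.mem_map.1 hy
    exact hf z hz
  have h2 := hf x hx
  omega

private lemma push_aux_le_sum {f : ℤ → ℤ} {m : Multiset ℤ} (hf : ∀ x ∈ m, 0 ≤ f x) :
    ∀ x ∈ m, f x ≤ (m.map f).sum := by
  intro x hx
  refine Multiset.single_le_sum ?_ _ (Multiset.mem_map_of_mem f hx)
  intro y hy
  obtain ⟨z, hz, rfl⟩ := Multiset.mem_map.1 hy
  exact hf z hz

private lemma push_aux_sum_ite (a : ℤ) (m : Multiset ℤ) :
    (m.map fun j => if j = a then (1 : ℤ) else 0).sum = m.count a := by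
  induction m using Multiset.induction with
  | empty => simp
  | cons b s ih =>
    rcases eq_or_ne b a with rfl | hb
    · simp [Multiset.count_cons, ih]; ring
    · simp [Multiset.count_cons, hb, Ne.symm hb, ih]

private lemma push_aux_card (m : Multiset ℤ) (h : ∀ j ∈ m, j = -2 ∨ j = -1 ∨ j = 0) :
    (Multiset.card m : ℤ) = m.count (-2) + m.count (-1) + m.count 0 := by
  induction m using Multiset.induction with
  | empty => simp
  | cons b s ih =>
    have hb := h b (Multiset.mem_cons_self b s)
    have ih' := ih fun j hj => h j (Multiset.mem_cons_of_mem hj)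
    rcases hb with rfl | rfl | rfl <;>
      simp only [Multiset.card_cons, Multiset.count_cons] <;>
      push_cast <;> norm_num <;> omega

/-- Let `X` be an elliptic curve and `f : X → ℙ¹` finite surjective of degree `n`.  For
the Atiyah bundle `E_r` (the unique indecomposable self-dual bundle of rank `r` and
degree `0` with `h^0(E_r) = 1`) one has `f_*E_r ≅ 𝒪 ⊕ 𝒪(-1)^{⊕(rn-2)} ⊕ 𝒪(-2)`,
while any other indecomposable bundle `E` of rank `r` and degree `0` has
`f_*E ≅ 𝒪(-1)^{⊕rn}`. -/
theorem pushforward_elliptic_degree_zero (S : PushforwardSetup) (hg : S.g = 1)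
    (r : ℕ) (hr : 0 < r) :
    S.push (S.atiyah r) = Multiset.replicate 1 (0 : ℤ)
      + Multiset.replicate (r * S.n - 2) (-1 : ℤ) + Multiset.replicate 1 (-2 : ℤ) ∧
    ∀ E : S.Bun, S.indec E → S.rank E = r → S.deg E = 0 → E ≠ S.atiyah r →
      S.push E = Multiset.replicate (r * S.n) (-1 : ℤ) := by
  have hn := S.npos
  constructor
  · set m := S.push (S.atiyah r) with hm
    have hcard : Multiset.card m = r * S.n := by
      rw [hm, S.push_card, S.atiyah_rank]
    -- twist by pull 1 to get lower bound j ≥ -2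
    have hindec : S.indec (S.tensor (S.pull 1) (S.atiyah r)) :=
      S.indec_tensor_pull 1 _ (S.atiyah_indec hg r hr)
    have hdegpos : 0 < S.deg (S.tensor (S.pull 1) (S.atiyah r)) := by
      rw [S.deg_tensor_line _ _ (S.rank_pull 1), S.atiyah_deg, S.deg_pull, S.atiyah_rank]
      have : (0:ℤ) < r := by exact_mod_cast hr
      have : (0:ℤ) < S.n := by exact_mod_cast hn
      nlinarith
    have h1twist : S.h1 (S.tensor (S.pull 1) (S.atiyah r)) = 0 :=
      S.ell_h1_pos hg _ hindec hdegpos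
    have hpush1 := S.push_h1 (S.tensor (S.pull 1) (S.atiyah r))
    rw [h1twist, S.projection, Multiset.map_map] at hpush1
    simp only [Function.comp, Nat.cast_zero] at hpush1
    have hge : ∀ j ∈ m, -2 ≤ j := by
      have hz := push_aux_sum_zero (f := fun j => max (-(j + 1) - 1) 0) (m := m)
        (fun x _ => le_max_right _ _) hpush1.symm
      intro j hj
      have h1 : max (-(j + 1) - 1) 0 = 0 := hz j hj
      have h2 : -(j + 1) - 1 ≤ max (-(j + 1) - 1) 0 := le_max_left _ _
      omega
    have hA0 := S.push_h0 (S.atiyah r)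
    rw [S.atiyah_h0 hg r hr] at hA0
    have hA1 := S.push_h1 (S.atiyah r)
    rw [S.atiyah_h1 hg r hr] at hA1
    rw [← hm] at hA0 hA1
    norm_num at hA0 hA1
    have hle : ∀ j ∈ m, j ≤ 0 := by
      intro j hj
      have hb : max (j + 1) 0 ≤ (m.map fun j => max (j + 1) 0).sum :=
        push_aux_le_sum (fun x _ => le_max_right _ _) j hj
      rw [← hA0] at hb
      have h2 : j + 1 ≤ max (j + 1) 0 := le_max_left _ _
      omega
    have hmem : ∀ j ∈ m, j = -2 ∨ j = -1 ∨ j = 0 := by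
      intro j hj
      have := hge j hj
      have := hle j hj
      omega
    have hcount2 : (m.count (-2) : ℤ) = 1 := by
      have hmapeq : Multiset.map (fun j => max (-j - 1) 0) m
          = Multiset.map (fun j => if j = -2 then (1 : ℤ) else 0) m := by
        refine Multiset.map_congr rfl ?_
        intro j hj
        rcases hmem j hj with rfl | rfl | rfl <;> norm_num
      rw [← push_aux_sum_ite, ← hmapeq]
      exact hA1.symm
    have hcount0 : (m.count 0 : ℤ) = 1 := by
      have hmapeq : Multiset.map (fun j => max (j + 1) 0) m
          = Multiset.map (fun j => if j = 0 then (1 : ℤ) else 0) m := by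
        refine Multiset.map_congr rfl ?_
        intro j hj
        rcases hmem j hj with rfl | rfl | rfl <;> norm_num
      rw [← push_aux_sum_ite, ← hmapeq]
      exact hA0.symm
    have hcards := push_aux_card m hmem
    have hcount1 : (m.count (-1) : ℤ) = (r : ℤ) * S.n - 2 := by
      rw [hcard] at hcards
      push_cast at hcards ⊢
      omega
    ext b
    simp only [Multiset.count_add, Multiset.count_replicate]
    by_cases hb0 : b = 0
    · subst hb0
      norm_num
      exact_mod_cast hcount0
    · by_cases hb1 : b = -1
      · subst hb1
        norm_num
        have : (r * S.n : ℤ) - 2 = ((r * S.n - 2 : ℕ) : ℤ) := by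
          have h2 : 2 ≤ r * S.n := by
            have := Multiset.count_le_card (-2 : ℤ) m
            have := Multiset.count_le_card (0 : ℤ) m
            rw [hcard] at *
            omega
          push_cast [Nat.cast_sub h2]
          ring
        rw [this] at hcount1
        exact_mod_cast hcount1
      · by_cases hb2 : b = -2
        · subst hb2
          norm_num
          exact_mod_cast hcount2
        · have hnotmem : b ∉ m := fun hbm => by
            rcases hmem b hbm with rfl | rfl | rfl
            exacts [hb2 rfl, hb1 rfl, hb0 rfl]
          rw [Multiset.count_eq_zero_of_notMem hnotmem, if_neg (Ne.symm hb0), if_neg (Ne.symm hb1), if_neg (Ne.symm hb2)]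
  · intro E hE hrank hdeg hne
    have h0E := S.ell_h0_zero hg E hE hdeg (by rw [hrank]; exact hne)
    have h1E := S.ell_h1_zero hg E hE hdeg (by rw [hrank]; exact hne)
    have hp0 := S.push_h0 E
    have hp1 := S.push_h1 E
    rw [h0E] at hp0
    rw [h1E] at hp1
    norm_num at hp0 hp1
    have hz0 := push_aux_sum_zero (f := fun j => max (j + 1) 0) (m := S.push E)
      (fun x _ => le_max_right _ _) hp0.symm
    have hz1 := push_aux_sum_zero (f := fun j => max (-j - 1) 0) (m := S.push E)
      (fun x _ => le_max_right _ _) hp1.symm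
    refine Multiset.eq_replicate.2 ⟨?_, ?_⟩
    · rw [S.push_card, hrank]
    · intro b hb
      have h1 : max (b + 1) 0 = 0 := hz0 b hb
      have h2 : max (-b - 1) 0 = 0 := hz1 b hb
      have h3 : b + 1 ≤ max (b + 1) 0 := le_max_left _ _
      have h4 : -b - 1 ≤ max (-b - 1) 0 := le_max_left _ _
      omega
end

section
/- Let f : X → ℙ¹ be a degree 2 map of smooth projective curves and L a line bundle on X with h^0(L) ≠ 0 and h^1(L) ≠ 0. Then f_*L ≅ 𝒪(h^0(L) - 1) ⊕ 𝒪(-h^1(L) - 1). -/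
/-- For a degree `2` map `f : X → ℙ¹` of smooth projective curves and a line bundle `L`
on `X` with `h^0(L) ≠ 0` and `h^1(L) ≠ 0`, one has
`f_*L ≅ 𝒪(h^0(L) - 1) ⊕ 𝒪(-h^1(L) - 1)`. -/
theorem pushforward_degree_two (S : PushforwardSetup) (hn : S.n = 2)
    (L : S.Bun) (hr : S.rank L = 1) (hL0 : S.h0 L ≠ 0) (hL1 : S.h1 L ≠ 0) :
    S.push L = {(S.h0 L : ℤ) - 1, -(S.h1 L : ℤ) - 1} := by
  have hcard : Multiset.card (S.push L) = 2 := by rw [S.push_card, hr, hn]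
  obtain ⟨a, b, hab⟩ := Multiset.card_eq_two.mp hcard
  have h0 := S.push_h0 L
  have h1 := S.push_h1 L
  rw [hab] at h0 h1 ⊢
  simp [Multiset.insert_eq_cons] at h0 h1
  have hh0 : (0:ℤ) < S.h0 L := by exact_mod_cast Nat.pos_of_ne_zero hL0
  have hh1 : (0:ℤ) < S.h1 L := by exact_mod_cast Nat.pos_of_ne_zero hL1
  have : (a = (S.h0 L : ℤ) - 1 ∧ b = -(S.h1 L : ℤ) - 1) ∨
      (a = -(S.h1 L : ℤ) - 1 ∧ b = (S.h0 L : ℤ) - 1) := by omega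
  rcases this with ⟨ha, hb⟩ | ⟨ha, hb⟩
  · rw [ha, hb]
  · rw [ha, hb]; exact Multiset.pair_comm _ _
end

section
/- Let f : X → ℙ¹ be a surjective map of smooth projective curves of genus g > 1 with even degree n, and L any line bundle on X. Then s(L,f) ≤ (2g - 2)/n + 5/2. In particular, for n = 2 one gets s(L,f) ≤ g + 1, and for even n ≥ 4 one gets s(L,f) ≤ (1/2)g + 2. -/
/-- For a surjective map `f : X → ℙ¹` of even degree `n` from a smooth projective curve
of genus `g > 1` and any line bundle `L` on `X`, `s(L,f) ≤ (2g - 2)/n + 5/2`; in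
particular for `n = 2` one has `s(L,f) ≤ g + 1`, and for even `n ≥ 4` one has
`s(L,f) ≤ (1/2)g + 2`. -/
theorem stabilization_even_degree (S : PushforwardSetup) (hg : 1 < S.g)
    (heven : Even S.n) (L : S.Bun) (hr : S.rank L = 1) :
    ∀ j ∈ S.push L, ∀ j' ∈ S.push L,
      (((|j - j'| : ℤ) : ℚ) ≤ (2 * (S.g : ℚ) - 2) / (S.n : ℚ) + 5/2) ∧
      (S.n = 2 → |j - j'| ≤ (S.g : ℤ) + 1) ∧
      (4 ≤ S.n → ((|j - j'| : ℤ) : ℚ) ≤ (1/2) * (S.g : ℚ) + 2) := by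

  classical
  have hn : (0:ℤ) < (S.n : ℤ) := by exact_mod_cast S.npos
  set d := S.deg L with hd
  -- Upper bound mechanism via vanishing of h^0
  have key_up : ∀ ℓ : ℤ, d + ℓ * (S.n : ℤ) < 0 → ∀ k ∈ S.push L, k + ℓ + 1 ≤ 0 := by
    intro ℓ hℓ k hk
    have hrank : S.rank (S.tensor (S.pull ℓ) L) = 1 := by
      rw [S.rank_tensor, S.rank_pull, hr]
    have hdeg : S.deg (S.tensor (S.pull ℓ) L) = d + ℓ * (S.n : ℤ) := by
      rw [S.deg_tensor_line _ _ (S.rank_pull ℓ), hr, S.deg_pull]; ring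
    have h00 : S.h0 (S.tensor (S.pull ℓ) L) = 0 :=
      S.h0_vanish _ hrank (by rw [hdeg]; exact hℓ)
    have hsum := S.push_h0 (S.tensor (S.pull ℓ) L)
    rw [h00, S.projection, Multiset.map_map] at hsum
    have hmem : max (k + ℓ + 1) 0 ∈
        (S.push L).map ((fun j => max (j + 1) 0) ∘ fun j => j + ℓ) := by
      simpa using Multiset.mem_map_of_mem ((fun j => max (j + 1) 0) ∘ fun j => j + ℓ) hk
    have hle := Multiset.single_le_sum
      (by intro x hx; rcases Multiset.mem_map.1 hx with ⟨y, _, rfl⟩; exact le_max_right _ _)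
      _ hmem
    have : max (k + ℓ + 1) 0 ≤ 0 := by
      calc max (k + ℓ + 1) 0 ≤ _ := hle
        _ = 0 := hsum.symm
    exact le_trans (le_max_left _ _) this
  -- Lower bound mechanism via vanishing of h^1
  have key_dn : ∀ ℓ : ℤ, 2 * (S.g : ℤ) - 2 < d + ℓ * (S.n : ℤ) →
      ∀ k ∈ S.push L, -(k + ℓ) - 1 ≤ 0 := by
    intro ℓ hℓ k hk
    have hrank : S.rank (S.tensor (S.pull ℓ) L) = 1 := by
      rw [S.rank_tensor, S.rank_pull, hr]
    have hdeg : S.deg (S.tensor (S.pull ℓ) L) = d + ℓ * (S.n : ℤ) := by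
      rw [S.deg_tensor_line _ _ (S.rank_pull ℓ), hr, S.deg_pull]; ring
    have h11 : S.h1 (S.tensor (S.pull ℓ) L) = 0 :=
      S.h1_vanish _ hrank (by rw [hdeg]; exact hℓ)
    have hsum := S.push_h1 (S.tensor (S.pull ℓ) L)
    rw [h11, S.projection, Multiset.map_map] at hsum
    have hmem : max (-(k + ℓ) - 1) 0 ∈
        (S.push L).map ((fun j => max (-j - 1) 0) ∘ fun j => j + ℓ) := by
      simpa using Multiset.mem_map_of_mem ((fun j => max (-j - 1) 0) ∘ fun j => j + ℓ) hk
    have hle := Multiset.single_le_sum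
      (by intro x hx; rcases Multiset.mem_map.1 hx with ⟨y, _, rfl⟩; exact le_max_right _ _)
      _ hmem
    have : max (-(k + ℓ) - 1) 0 ≤ 0 := by
      calc max (-(k + ℓ) - 1) 0 ≤ _ := hle
        _ = 0 := hsum.symm
    exact le_trans (le_max_left _ _) this
  set q1 := d / (S.n : ℤ) with hq1def
  set q2 := (2 * (S.g : ℤ) - 2 - d) / (S.n : ℤ) with hq2def
  have hne : (S.n : ℤ) ≠ 0 := ne_of_gt hn
  have hq1a : (S.n : ℤ) * q1 + d % (S.n : ℤ) = d := Int.mul_ediv_add_emod d _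
  have hr1a : 0 ≤ d % (S.n : ℤ) := Int.emod_nonneg d hne
  have hr1b : d % (S.n : ℤ) < (S.n : ℤ) := Int.emod_lt_of_pos d hn
  have hq2a : (S.n : ℤ) * q2 + (2 * (S.g : ℤ) - 2 - d) % (S.n : ℤ)
      = 2 * (S.g : ℤ) - 2 - d := Int.mul_ediv_add_emod _ _
  have hr2a : 0 ≤ (2 * (S.g : ℤ) - 2 - d) % (S.n : ℤ) := Int.emod_nonneg _ hne
  have hr2b : (2 * (S.g : ℤ) - 2 - d) % (S.n : ℤ) < (S.n : ℤ) :=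
    Int.emod_lt_of_pos _ hn
  have hup : ∀ k ∈ S.push L, k ≤ q1 := by
    intro k hk
    have h := key_up (-q1 - 1) (by nlinarith [hq1a, hr1b]) k hk
    linarith
  have hdn : ∀ k ∈ S.push L, -q2 - 2 ≤ k := by
    intro k hk
    have h := key_dn (q2 + 1) (by nlinarith [hq2a, hr2b, hr2a]) k hk
    linarith
  intro j hj j' hj'
  have habs : |j - j'| ≤ q1 + q2 + 2 := by
    have h1 := hup j hj
    have h2 := hup j' hj'
    have h3 := hdn j hj
    have h4 := hdn j' hj'
    rw [abs_le]; constructor <;> linarith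
  have hsumq : (S.n : ℤ) * (q1 + q2) ≤ 2 * (S.g : ℤ) - 2 := by linarith
  have hnQ : (0:ℚ) < (S.n : ℚ) := by exact_mod_cast S.npos
  have hqQ : ((q1 : ℚ) + (q2 : ℚ)) ≤ (2 * (S.g : ℚ) - 2) / (S.n : ℚ) := by
    rw [le_div_iff₀ hnQ]
    have : ((S.n : ℤ) * (q1 + q2) : ℚ) ≤ ((2 * (S.g : ℤ) - 2 : ℤ) : ℚ) := by
      exact_mod_cast hsumq
    push_cast at this ⊢
    nlinarith [this]
  have habsQ : ((|j - j'| : ℤ) : ℚ) ≤ (q1 : ℚ) + (q2 : ℚ) + 2 := by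
    exact_mod_cast habs
  refine ⟨by linarith, ?_, ?_⟩
  · intro hn2
    have h1 := hup j hj
    have h2 := hup j' hj'
    have h3 := hdn j hj
    have h4 := hdn j' hj'
    have hn2' : (S.n : ℤ) = 2 := by exact_mod_cast hn2
    rw [hn2'] at hq1a hq2a hr1a hr1b hr2a hr2b
    rw [abs_le]; constructor <;> linarith
  · intro hn4
    have hg2 : (0:ℚ) ≤ 2 * (S.g : ℚ) - 2 := by
      have : (1:ℚ) < (S.g : ℚ) := by exact_mod_cast hg
      linarith
    have hn4Q : (4:ℚ) ≤ (S.n : ℚ) := by exact_mod_cast hn4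
    have : (2 * (S.g : ℚ) - 2) / (S.n : ℚ) ≤ (2 * (S.g : ℚ) - 2) / 4 := by
      apply div_le_div_of_nonneg_left hg2 (by norm_num) hn4Q
    have hfin : (2 * (S.g : ℚ) - 2) / 4 = (1/2) * (S.g : ℚ) - 1/2 := by ring
    linarith
end

section
/- Let f : X → ℙ¹ be a degree n map of smooth projective curves of genus 2 with n > 2, and L any line bundle on X. Then s(L,f) ≤ 2, i.e. the degrees of the line bundle summands of f_*L lie in an interval of length at most 2. -/
/-- For a degree `n > 2` map `f : X → ℙ¹` from a smooth projective curve of genus `2`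
and any line bundle `L` on `X`, `s(L,f) ≤ 2`: the degrees of the line bundle summands
of `f_*L` lie in an interval of length at most `2`. -/
theorem stabilization_genus_two (S : PushforwardSetup) (hg : S.g = 2)
    (hn : 2 < S.n) (L : S.Bun) (hr : S.rank L = 1) :
    ∀ j ∈ S.push L, ∀ j' ∈ S.push L, |j - j'| ≤ 2 := by
  intro j hj j' hj'
  have hn0 : (0:ℤ) < (S.n : ℤ) := by exact_mod_cast S.npos
  set d := S.deg L with hd
  set q := d / (S.n : ℤ) with hq
  have hmod1 : 0 ≤ d % (S.n : ℤ) := Int.emod_nonneg d (by omega)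
  have hmod2 : d % (S.n : ℤ) < (S.n : ℤ) := Int.emod_lt_of_pos d hn0
  have hmoddef : d % (S.n : ℤ) = d - (S.n : ℤ) * q := Int.emod_def d (S.n : ℤ)
  have key : ∀ k ∈ S.push L, k ≤ q ∧ q - 2 ≤ k := by
    intro k hk
    constructor
    · -- twist by pull (-q-1): negative degree, h0 = 0
      have hrank : S.rank (S.tensor (S.pull (-q-1)) L) = 1 := by
        rw [S.rank_tensor, S.rank_pull, hr]
      have hdeg : S.deg (S.tensor (S.pull (-q-1)) L) = (-q-1) * (S.n : ℤ) + d := by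
        rw [S.deg_tensor_line _ _ (S.rank_pull _), hr, S.deg_pull]; ring
      have hneg : S.deg (S.tensor (S.pull (-q-1)) L) < 0 := by
        have e1 : (-q-1) * (S.n : ℤ) + d = d % (S.n : ℤ) - (S.n : ℤ) := by
          rw [hmoddef]; ring
        rw [hdeg, e1]; omega
      have h0z : S.h0 (S.tensor (S.pull (-q-1)) L) = 0 := S.h0_vanish _ hrank hneg
      have hsum := S.push_h0 (S.tensor (S.pull (-q-1)) L)
      rw [h0z, S.projection, Multiset.map_map] at hsum
      have hfun : ((fun j => max (j + 1) 0) ∘ (fun j => j + (-q-1))) =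
          fun j : ℤ => max (j - q) 0 := by
        funext x; simp only [Function.comp]; congr 1; ring
      rw [hfun] at hsum
      have hnn : ∀ x ∈ (S.push L).map (fun j : ℤ => max (j - q) 0), 0 ≤ x := by
        intro x hx
        obtain ⟨y, _, rfl⟩ := Multiset.mem_map.mp hx
        exact le_max_right _ _
      have hle := Multiset.single_le_sum hnn (max (k - q) 0)
        (Multiset.mem_map_of_mem _ hk)
      rw [← hsum] at hle
      have := le_max_left (k - q) 0
      omega
    · -- twist by pull (-q+1): degree > 2g-2, h1 = 0
      have hrank : S.rank (S.tensor (S.pull (-q+1)) L) = 1 := by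
        rw [S.rank_tensor, S.rank_pull, hr]
      have hdeg : S.deg (S.tensor (S.pull (-q+1)) L) = (-q+1) * (S.n : ℤ) + d := by
        rw [S.deg_tensor_line _ _ (S.rank_pull _), hr, S.deg_pull]; ring
      have hbig : 2 * (S.g : ℤ) - 2 < S.deg (S.tensor (S.pull (-q+1)) L) := by
        have e1 : (-q+1) * (S.n : ℤ) + d = d % (S.n : ℤ) + (S.n : ℤ) := by
          rw [hmoddef]; ring
        have hn2 : (2:ℤ) < (S.n : ℤ) := by exact_mod_cast hn
        rw [hdeg, hg, e1]
        push_cast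
        omega
      have h1z : S.h1 (S.tensor (S.pull (-q+1)) L) = 0 := S.h1_vanish _ hrank hbig
      have hsum := S.push_h1 (S.tensor (S.pull (-q+1)) L)
      rw [h1z, S.projection, Multiset.map_map] at hsum
      have hfun : ((fun j => max (-j - 1) 0) ∘ (fun j => j + (-q+1))) =
          fun j : ℤ => max (q - j - 2) 0 := by
        funext x; simp only [Function.comp]; congr 1; ring
      rw [hfun] at hsum
      have hnn : ∀ x ∈ (S.push L).map (fun j : ℤ => max (q - j - 2) 0), 0 ≤ x := by
        intro x hx
        obtain ⟨y, _, rfl⟩ := Multiset.mem_map.mp hx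
        exact le_max_right _ _
      have hle := Multiset.single_le_sum hnn (max (q - k - 2) 0)
        (Multiset.mem_map_of_mem _ hk)
      rw [← hsum] at hle
      have := le_max_left (q - k - 2) 0
      omega
  obtain ⟨h1, h2⟩ := key j hj
  obtain ⟨h3, h4⟩ := key j' hj'
  rw [abs_le]
  omega
end
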